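/- arXiv:2408.16330 — 5 statements merged into one kernel-verified Lean document; each statement's English description precedes it below -/
import Mathlib

section
/- Local sensitivity of constrained estimators (Proposition 1): Let L : ℝ^p × ℝ^q × ℝ^r → ℝ and F : ℝ^p × ℝ^q × ℝ^r → ℝ^q be twice continuously differentiable, and let θ : ℝ^r → ℝ^p, V : ℝ^r → ℝ^q, λ : ℝ^r → ℝ^q be differentiable functions such that for every γ ∈ ℝ^r the following first-order (KKT) conditions hold at the point (θ(γ), V(γ), γ): (i) ∂L/∂θ_i = Σ_{m=1}^q λ_m(γ) · ∂F_m/∂θ_i for every i = 1,…,p; (ii) ∂L/∂V_k + λ_k(γ) − Σ_{m=1}^q λ_m(γ) · ∂F_m/∂V_k = 0 for every k = 1,…,q; (iii) V(γ) = F(θ(γ), V(γ), γ). Then for every γ the Jacobian matrices Dθ(γ) ∈ ℝ^{p×r}, DV(γ) ∈ ℝ^{q×r}, Dλ(γ) ∈ ℝ^{q×r} satisfy the linear system: A_{θ,θ}·Dθ(γ) + A_{θ,V}·DV(γ) − (D_θF)ᵀ·Dλ(γ) = −A_{θ,γ}; A_{V,θ}·Dθ(γ) + A_{V,V}·DV(γ)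 + (I_q − D_VF)ᵀ·Dλ(γ) = −A_{V,γ}; (D_θF)·Dθ(γ) + (D_VF − I_q)·DV(γ) = −D_γF; where for symbols x ∈ {θ, V} and y ∈ {θ, V, γ}, A_{x,y} denotes the matrix whose (i,j) entry is ∂²L/∂x_i∂y_j − Σ_{m=1}^q λ_m(γ) · ∂²F_m/∂x_i∂y_j, and all partial derivatives of L and F are evaluated at (θ(γ), V(γ), γ). -/
/-!
Each KKT condition holds identically in `γ`, so it may be differentiated along the path
`γ ↦ (θ γ, V γ, γ)`, whose derivative in the direction `eⱼ` is `(Dθ eⱼ, DV eⱼ, eⱼ)`. For the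
stationarity conditions the chain and product rules give the Hessian of the Lagrangian
`L - ∑ₘ λₘ Fₘ` applied to this tangent vector, minus the term `(D F)ᵀ Dλ` coming from the moving
multiplier; for the fixed-point condition they give `DV = D F ∘ (Dθ, DV, I)`. Expanding the tangent
vector in the coordinate basis turns these linear identities into the three block equations.
-/

open Matrix

section Coordinates

variable {R M : Type*} [CommSemiring R] [AddCommMonoid M] [Module R M]
  {ι κ τ η : Type*} [Fintype ι] [Fintype κ] [Fintype τ] [DecidableEq ι] [DecidableEq κ]
  [DecidableEq τ]

theorem LinearMap.apply_prod_eq_sum_single (T : (ι → R) × (κ → R) × (τ → R) →ₗ[R] M)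
    (a : ι → R) (b : κ → R) (c : τ → R) :
    T (a, b, c) = ∑ i, a i • T (Pi.single i 1, 0, 0) + ∑ k, b k • T (0, Pi.single k 1, 0)
      + ∑ t, c t • T (0, 0, Pi.single t 1) := by
  simp only [← map_smul, ← map_sum, ← map_add]
  congr 1
  ext <;> simp [Prod.fst_sum, Prod.snd_sum, Pi.single_apply]

theorem Matrix.of_apply_prod_single {T : η → (ι → R) × (κ → R) × (τ → R) → R}
    (hT : ∀ i, IsLinearMap R (T i)) (a : τ → ι → R) (b : τ → κ → R) :
    of (fun i j => T i (a j, b j, Pi.single j 1)) =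
      of (fun i k => T i (Pi.single k 1, 0, 0)) * (of a)ᵀ
        + of (fun i l => T i (0, Pi.single l 1, 0)) * (of b)ᵀ
        + of (fun i t => T i (0, 0, Pi.single t 1)) := by
  ext i j
  rw [of_apply, ← IsLinearMap.mk'_apply (hT i), LinearMap.apply_prod_eq_sum_single]
  simp [mul_apply, mul_comm, Pi.single_apply]

end Coordinates

section Calculus

variable {X E ν : Type*} [NormedAddCommGroup X] [NormedSpace ℝ X] [NormedAddCommGroup E]
  [NormedSpace ℝ E] [Fintype ν]

/-- The paper's `A_{x,y}` has entries `lagrangianHessian L F (λ γ) z (e_x i) (e_y j)`. -/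
noncomputable def lagrangianHessian (L : E → ℝ) (F : E → ν → ℝ) (μ : ν → ℝ) (z v w : E) : ℝ :=
  fderiv ℝ (fun z' => fderiv ℝ L z' v) z w - ∑ m, μ m * fderiv ℝ (fun z' => fderiv ℝ F z' v) z w m

theorem isLinearMap_lagrangianHessian (L : E → ℝ) (F : E → ν → ℝ) (μ : ν → ℝ) (z v : E) :
    IsLinearMap ℝ (lagrangianHessian L F μ z v) := by
  refine ⟨fun w w' => ?_, fun c w => ?_⟩
  · simp only [lagrangianHessian, map_add, Pi.add_apply, mul_add, Finset.sum_add_distrib]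
    ring
  · simp only [lagrangianHessian, map_smul, Pi.smul_apply, smul_eq_mul, mul_sub, Finset.mul_sum,
      mul_left_comm]

theorem lagrangianHessian_sub_eq_of_forall {L : E → ℝ} {F : E → ν → ℝ} {G : X → E}
    {μ : X → ν → ℝ} {φ : X → ℝ} {G' : X →L[ℝ] E} {μ' : X →L[ℝ] ν → ℝ} {φ' : X →L[ℝ] ℝ} {x : X}
    (hL : DifferentiableAt ℝ (fderiv ℝ L) (G x)) (hF : DifferentiableAt ℝ (fderiv ℝ F) (G x))
    (hG : HasFDerivAt G G' x) (hμ : HasFDerivAt μ μ' x) (hφ : HasFDerivAt φ φ' x) (v : E)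
    (hres : ∀ y, fderiv ℝ L (G y) v - ∑ m, μ y m * fderiv ℝ F (G y) v m = φ y) (u : X) :
    lagrangianHessian L F (μ x) (G x) v (G' u) - ∑ m, fderiv ℝ F (G x) v m * μ' u m = φ' u := by
  have hLv : HasFDerivAt (fun y => fderiv ℝ L (G y) v) _ x :=
    (hL.clm_apply (differentiableAt_const v)).hasFDerivAt.comp x hG
  have hFv : HasFDerivAt (fun y => fderiv ℝ F (G y) v) _ x :=
    (hF.clm_apply (differentiableAt_const v)).hasFDerivAt.comp x hG
  have hres' : HasFDerivAt (fun y => fderiv ℝ L (G y) v - ∑ m, μ y m * fderiv ℝ F (G y) v m) _ x :=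
    hLv.sub (HasFDerivAt.fun_sum fun m _ =>
      ((hasFDerivAt_apply m _).comp x hμ).fun_mul (hasFDerivAt_pi'.1 hFv m))
  rw [funext hres] at hres'
  rw [← hres'.unique hφ]
  simp only [lagrangianHessian, Finset.sum_add_distrib, _root_.sub_apply, _root_.add_apply,
    _root_.sum_apply, _root_.smul_apply, ContinuousLinearMap.comp_apply,
    ContinuousLinearMap.proj_apply, smul_eq_mul]
  ring

end Calculus

section Sensitivity

noncomputable def jacobian {τ α : Type*} [DecidableEq τ] (f : (τ → ℝ) → α → ℝ) (x : τ → ℝ) :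
    Matrix α τ ℝ :=
  (of fun j => fderiv ℝ f x (Pi.single j 1))ᵀ

theorem jacobian_const {τ α : Type*} [DecidableEq τ] (c : α → ℝ) (x : τ → ℝ) :
    jacobian (fun _ => c) x = 0 := by
  ext; simp [jacobian]

variable {ι κ τ : Type*} [Fintype ι] [Fintype κ] [Fintype τ]
  {θ : (τ → ℝ) → ι → ℝ} {V : (τ → ℝ) → κ → ℝ} {γ : τ → ℝ}

theorem hasFDerivAt_prodMk_prodMk_id (hθ : DifferentiableAt ℝ θ γ) (hV : DifferentiableAt ℝ V γ) :
    HasFDerivAt (fun y => (θ y, V y, y))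
      ((fderiv ℝ θ γ).prod ((fderiv ℝ V γ).prod (ContinuousLinearMap.id ℝ _))) γ :=
  hθ.hasFDerivAt.prodMk (hV.hasFDerivAt.prodMk (hasFDerivAt_id γ))

variable [DecidableEq ι] [DecidableEq κ] [DecidableEq τ]

theorem jacobian_of_stationarity {η ν : Type*} [Fintype η] [Fintype ν]
    {L : (ι → ℝ) × (κ → ℝ) × (τ → ℝ) → ℝ} {F : (ι → ℝ) × (κ → ℝ) × (τ → ℝ) → ν → ℝ}
    {lam : (τ → ℝ) → ν → ℝ} {ψ : (τ → ℝ) → η → ℝ} (e : η → (ι → ℝ) × (κ → ℝ) × (τ → ℝ))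
    (hL : DifferentiableAt ℝ (fderiv ℝ L) (θ γ, V γ, γ))
    (hF : DifferentiableAt ℝ (fderiv ℝ F) (θ γ, V γ, γ))
    (hθ : DifferentiableAt ℝ θ γ) (hV : DifferentiableAt ℝ V γ)
    (hlam : DifferentiableAt ℝ lam γ) (hψ : DifferentiableAt ℝ ψ γ)
    (hstat : ∀ y i, fderiv ℝ L (θ y, V y, y) (e i) + ψ y i
      - ∑ m, lam y m * fderiv ℝ F (θ y, V y, y) (e i) m = 0) :
    of (fun i k => lagrangianHessian L F (lam γ) (θ γ, V γ, γ) (e i) (Pi.single k 1, 0, 0))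
        * jacobian θ γ
      + of (fun i l => lagrangianHessian L F (lam γ) (θ γ, V γ, γ) (e i) (0, Pi.single l 1, 0))
        * jacobian V γ
      + jacobian ψ γ - (of fun m i => fderiv ℝ F (θ γ, V γ, γ) (e i) m)ᵀ * jacobian lam γ
      = -of (fun i t => lagrangianHessian L F (lam γ) (θ γ, V γ, γ) (e i) (0, 0, Pi.single t 1)) := by
  have hrow : of (fun i j => lagrangianHessian L F (lam γ) (θ γ, V γ, γ) (e i)
      (fderiv ℝ θ γ (Pi.single j 1), fderiv ℝ V γ (Pi.single j 1), Pi.single j 1))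
      + jacobian ψ γ = (of fun m i => fderiv ℝ F (θ γ, V γ, γ) (e i) m)ᵀ * jacobian lam γ := by
    ext i j
    have hderiv := lagrangianHessian_sub_eq_of_forall (G := fun y => (θ y, V y, y)) hL hF
      (hasFDerivAt_prodMk_prodMk_id hθ hV) hlam.hasFDerivAt
      (hasFDerivAt_pi'.1 hψ.hasFDerivAt i).fun_neg (e i) (fun y => by linarith [hstat y i])
      (Pi.single j 1)
    simp only [ContinuousLinearMap.prod_apply, ContinuousLinearMap.id_apply, _root_.neg_apply,
      ContinuousLinearMap.comp_apply, ContinuousLinearMap.proj_apply] at hderiv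
    simp only [jacobian, Matrix.add_apply, mul_apply, of_apply, transpose_apply]
    linarith
  rw [Matrix.of_apply_prod_single (fun i => isLinearMap_lagrangianHessian _ _ _ _ (e i))] at hrow
  rw [← hrow]
  unfold jacobian
  abel

theorem jacobian_of_fixedPoint {F : (ι → ℝ) × (κ → ℝ) × (τ → ℝ) → κ → ℝ}
    (hF : DifferentiableAt ℝ F (θ γ, V γ, γ)) (hθ : DifferentiableAt ℝ θ γ)
    (hV : DifferentiableAt ℝ V γ) (hfix : ∀ y, V y = F (θ y, V y, y)) :
    of (fun m i => fderiv ℝ F (θ γ, V γ, γ) (Pi.single i 1, 0, 0) m) * jacobian θ γ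
      + (of (fun m l => fderiv ℝ F (θ γ, V γ, γ) (0, Pi.single l 1, 0) m) - 1) * jacobian V γ
      = -of (fun m t => fderiv ℝ F (θ γ, V γ, γ) (0, 0, Pi.single t 1) m) := by
  have hDV := hV.hasFDerivAt.unique <|
    (hF.hasFDerivAt.comp γ (hasFDerivAt_prodMk_prodMk_id hθ hV)).congr_of_eventuallyEq
      (Filter.Eventually.of_forall hfix)
  have hcol : of (fun m j => fderiv ℝ F (θ γ, V γ, γ)
      (fderiv ℝ θ γ (Pi.single j 1), fderiv ℝ V γ (Pi.single j 1), Pi.single j 1) m)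
      = jacobian V γ := by
    ext m j
    conv_rhs => rw [jacobian, transpose_apply, of_apply, hDV]
    rfl
  rw [Matrix.of_apply_prod_single (T := fun m w => fderiv ℝ F (θ γ, V γ, γ) w m)
    (fun m => ((ContinuousLinearMap.proj m).comp (fderiv ℝ F (θ γ, V γ, γ))).toLinearMap.isLinear)]
    at hcol
  unfold jacobian at hcol ⊢
  rw [Matrix.sub_mul, Matrix.one_mul]
  linear_combination (norm := abel) hcol

end Sensitivity

/-- Local sensitivity of constrained estimators (Proposition 1).
Partial derivatives are expressed as (iterated) directional Fréchet derivatives on the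
product space `(Fin p → ℝ) × (Fin q → ℝ) × (Fin r → ℝ)`; `lam` plays the role of the
Lagrange multiplier `λ`. -/
theorem stmt_0 (p q r : ℕ)
    (L : ((Fin p → ℝ) × (Fin q → ℝ) × (Fin r → ℝ)) → ℝ)
    (F : ((Fin p → ℝ) × (Fin q → ℝ) × (Fin r → ℝ)) → (Fin q → ℝ))
    (hL : ContDiff ℝ 2 L) (hF : ContDiff ℝ 2 F)
    (θ : (Fin r → ℝ) → (Fin p → ℝ))
    (V : (Fin r → ℝ) → (Fin q → ℝ))
    (lam : (Fin r → ℝ) → (Fin q → ℝ))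
    (hθ : Differentiable ℝ θ) (hV : Differentiable ℝ V) (hlam : Differentiable ℝ lam)
    (hKKT1 : ∀ (γ : Fin r → ℝ) (i : Fin p),
      fderiv ℝ L (θ γ, V γ, γ) ((Pi.single i 1 : Fin p → ℝ), 0, 0)
        = ∑ m : Fin q, lam γ m
            * fderiv ℝ F (θ γ, V γ, γ) ((Pi.single i 1 : Fin p → ℝ), 0, 0) m)
    (hKKT2 : ∀ (γ : Fin r → ℝ) (k : Fin q),
      fderiv ℝ L (θ γ, V γ, γ) (0, (Pi.single k 1 : Fin q → ℝ), 0) + lam γ k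
        - ∑ m : Fin q, lam γ m
            * fderiv ℝ F (θ γ, V γ, γ) (0, (Pi.single k 1 : Fin q → ℝ), 0) m = 0)
    (hKKT3 : ∀ γ : Fin r → ℝ, V γ = F (θ γ, V γ, γ))
    (γ : Fin r → ℝ) :
    let E := (Fin p → ℝ) × (Fin q → ℝ) × (Fin r → ℝ)
    let z : E := (θ γ, V γ, γ)
    let eθ : Fin p → E := fun i => ((Pi.single i 1 : Fin p → ℝ), 0, 0)
    let eV : Fin q → E := fun k => (0, (Pi.single k 1 : Fin q → ℝ), 0)
    let eγ : Fin r → E := fun j => (0, 0, (Pi.single j 1 : Fin r → ℝ))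
    let D2L : E → E → ℝ := fun v w => fderiv ℝ (fun z' => fderiv ℝ L z' v) z w
    let D2F : E → E → Fin q → ℝ := fun v w => fderiv ℝ (fun z' => fderiv ℝ F z' v) z w
    let Aθθ : Matrix (Fin p) (Fin p) ℝ := Matrix.of fun i k =>
      D2L (eθ i) (eθ k) - ∑ m : Fin q, lam γ m * D2F (eθ i) (eθ k) m
    let AθV : Matrix (Fin p) (Fin q) ℝ := Matrix.of fun i k =>
      D2L (eθ i) (eV k) - ∑ m : Fin q, lam γ m * D2F (eθ i) (eV k) m
    let Aθγ : Matrix (Fin p) (Fin r) ℝ := Matrix.of fun i j =>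
      D2L (eθ i) (eγ j) - ∑ m : Fin q, lam γ m * D2F (eθ i) (eγ j) m
    let AVθ : Matrix (Fin q) (Fin p) ℝ := Matrix.of fun k i =>
      D2L (eV k) (eθ i) - ∑ m : Fin q, lam γ m * D2F (eV k) (eθ i) m
    let AVV : Matrix (Fin q) (Fin q) ℝ := Matrix.of fun k l =>
      D2L (eV k) (eV l) - ∑ m : Fin q, lam γ m * D2F (eV k) (eV l) m
    let AVγ : Matrix (Fin q) (Fin r) ℝ := Matrix.of fun k j =>
      D2L (eV k) (eγ j) - ∑ m : Fin q, lam γ m * D2F (eV k) (eγ j) m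
    let DθF : Matrix (Fin q) (Fin p) ℝ := Matrix.of fun m i => fderiv ℝ F z (eθ i) m
    let DVF : Matrix (Fin q) (Fin q) ℝ := Matrix.of fun m k => fderiv ℝ F z (eV k) m
    let DγF : Matrix (Fin q) (Fin r) ℝ := Matrix.of fun m j => fderiv ℝ F z (eγ j) m
    let Dθ : Matrix (Fin p) (Fin r) ℝ := Matrix.of fun i j =>
      fderiv ℝ θ γ (Pi.single j 1) i
    let DV : Matrix (Fin q) (Fin r) ℝ := Matrix.of fun k j =>
      fderiv ℝ V γ (Pi.single j 1) k
    let Dlam : Matrix (Fin q) (Fin r) ℝ := Matrix.of fun k j =>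
      fderiv ℝ lam γ (Pi.single j 1) k
    Aθθ * Dθ + AθV * DV - DθFᵀ * Dlam = -Aθγ ∧
    AVθ * Dθ + AVV * DV + (1 - DVF)ᵀ * Dlam = -AVγ ∧
    DθF * Dθ + (DVF - 1) * DV = -DγF := by
  intro E z eθ eV eγ D2L D2F Aθθ AθV Aθγ AVθ AVV AVγ DθF DVF DγF Dθ DV Dlam
  have hDL : DifferentiableAt ℝ (fderiv ℝ L) z :=
    (hL.fderiv_right (m := 1) le_rfl).differentiable one_ne_zero z
  have hDF : DifferentiableAt ℝ (fderiv ℝ F) z :=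
    (hF.fderiv_right (m := 1) le_rfl).differentiable one_ne_zero z
  have hθrow : Aθθ * Dθ + AθV * DV + jacobian (fun _ => (0 : Fin p → ℝ)) γ - DθFᵀ * Dlam = -Aθγ :=
    jacobian_of_stationarity eθ hDL hDF (hθ γ) (hV γ) (hlam γ) (differentiableAt_const _)
      fun y i => by simpa using sub_eq_zero.mpr (hKKT1 y i)
  have hVrow : AVθ * Dθ + AVV * DV + Dlam - DVFᵀ * Dlam = -AVγ :=
    jacobian_of_stationarity eV hDL hDF (hθ γ) (hV γ) (hlam γ) (hlam γ) hKKT2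
  refine ⟨?_, ?_, jacobian_of_fixedPoint (hF.differentiable (by norm_num) z) (hθ γ) (hV γ) hKKT3⟩
  · rwa [jacobian_const, add_zero] at hθrow
  · rw [transpose_sub, transpose_one, Matrix.sub_mul, Matrix.one_mul]
    linear_combination (norm := abel) hVrow
end

section
/- Derivative of flow utility under a general normalization (Corollary 1): Let Q_a and Q_A be X×X real matrices, let p_A, p_a ∈ ℝ^X have all entries in (0,1), let π̄_A ∈ ℝ^X be a fixed vector, and let β ∈ ℝ be such that I_X − βQ_A is invertible. Define π_a(t) := (I_X − tQ_a)(I_X − tQ_A)⁻¹(π̄_A − log p_A) + log p_a, where log is applied componentwise. Then π_a is differentiable at β with derivative ∂π_a/∂β = −[Q_a(I_X − βQ_A)⁻¹ − (I_X − βQ_A)⁻¹Q_A](I_X − βQ_A)⁻¹(π̄_A − log p_A). -/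
/-!
With `G = (1 - β • Q_A)⁻¹`, the product rule and `d/dt (1 - t • Q_A)⁻¹ = G Q_A G` give the
derivative `-Q_a G + (1 - β • Q_a) G Q_A G`; the resolvent identity `G G - β • G Q_A G = G`
turns this into `-(Q_a G - G Q_A) G`.
-/

attribute [local instance] Matrix.linftyOpNormedAddCommGroup Matrix.linftyOpNormedSpace
  Matrix.linftyOpNormedRing Matrix.linftyOpNormedAlgebra

section

variable {𝕜 R : Type*} [NontriviallyNormedField 𝕜] [NormedRing R] [NormedAlgebra 𝕜 R]

theorem hasDerivAt_one_sub_smul (a : R) (t : 𝕜) :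
    HasDerivAt (fun s : 𝕜 => 1 - s • a) (-a) t := by
  simpa using ((hasDerivAt_id t).smul_const a).const_sub 1

theorem HasDerivAt.ringInverse [HasSummableGeomSeries R] {f : 𝕜 → R} {f' : R} {t : 𝕜}
    (hf : HasDerivAt f f' t) (ht : IsUnit (f t)) :
    HasDerivAt (fun s => Ring.inverse (f s))
      (-(Ring.inverse (f t) * f' * Ring.inverse (f t))) t := by
  obtain ⟨u, hu⟩ := ht
  have h := (hu ▸ hasFDerivAt_ringInverse (𝕜 := 𝕜) u).comp_hasDerivAt t hf
  rw [neg_apply, ContinuousLinearMap.mulLeftRight_apply] at h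
  rw [← hu, Ring.inverse_unit]
  exact h

end

theorem mul_self_sub_smul_mul_mul_eq_self {𝕜 R : Type*} [CommRing 𝕜] [Ring R] [Algebra 𝕜 R]
    {q g : R} {c : 𝕜} (hg : g * (1 - c • q) = 1) : g * g - c • (g * q * g) = g := by
  calc g * g - c • (g * q * g) = g * (1 - c • q) * g := by
        simp only [mul_sub, sub_mul, mul_one, mul_smul_comm, smul_mul_assoc]
    _ = g := by rw [hg, one_mul]

theorem neg_mul_add_one_sub_smul_mul_eq {𝕜 R : Type*} [CommRing 𝕜] [Ring R] [Algebra 𝕜 R]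
    {a q g : R} {c : 𝕜} (hg : g * (1 - c • q) = 1) :
    -a * g + (1 - c • a) * (g * q * g) = -((a * g - g * q) * g) := by
  have h := congrArg (a * ·) (mul_self_sub_smul_mul_mul_eq_self hg)
  rw [← sub_eq_zero, ← sub_eq_zero.mpr h]
  simp only [mul_sub, sub_mul, neg_mul, one_mul, smul_mul_assoc, mul_smul_comm, mul_assoc]
  abel

namespace Matrix

variable {𝕜 m n : Type*} [RCLike 𝕜] [Fintype m] [Fintype n]

theorem _root_.HasDerivAt.matrix_mulVec {F : 𝕜 → Matrix m n 𝕜} {F' : Matrix m n 𝕜} {t : 𝕜}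
    (hF : HasDerivAt F F' t) (v : n → 𝕜) : HasDerivAt (fun s => F s *ᵥ v) (F' *ᵥ v) t :=
  let L : Matrix m n 𝕜 →L[𝕜] m → 𝕜 :=
    LinearMap.toContinuousLinearMap ((mulVecBilin 𝕜 𝕜).flip v)
  L.hasFDerivAt.comp_hasDerivAt t hF

theorem hasDerivAt_inv_one_sub_smul [DecidableEq n] {Q : Matrix n n 𝕜} {t : 𝕜}
    (ht : IsUnit (1 - t • Q)) :
    HasDerivAt (fun s : 𝕜 => (1 - s • Q)⁻¹) ((1 - t • Q)⁻¹ * Q * (1 - t • Q)⁻¹) t := by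
  have h := (hasDerivAt_one_sub_smul Q t).ringInverse ht
  simp only [neg_mul, mul_neg, neg_neg] at h
  simp only [nonsing_inv_eq_ringInverse]
  exact h

end Matrix

theorem stmt_5_general (X : ℕ) (Qa QA : Matrix (Fin X) (Fin X) ℝ)
    (pA pa : Fin X → ℝ) (πbarA : Fin X → ℝ)
    (β : ℝ)
    (hinv : IsUnit ((1 : Matrix (Fin X) (Fin X) ℝ) - β • QA)) :
    HasDerivAt
      (fun t : ℝ =>
        (((1 : Matrix (Fin X) (Fin X) ℝ) - t • Qa) * (1 - t • QA)⁻¹).mulVec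
            (fun x => πbarA x - Real.log (pA x))
          + fun x => Real.log (pa x))
      ((-((Qa * (1 - β • QA)⁻¹ - (1 - β • QA)⁻¹ * QA) * (1 - β • QA)⁻¹)).mulVec
        (fun x => πbarA x - Real.log (pA x))) β := by
  have hF := (hasDerivAt_one_sub_smul Qa β).mul (Matrix.hasDerivAt_inv_one_sub_smul hinv)
  have hg : (1 - β • QA)⁻¹ * (1 - β • QA) = 1 :=
    Matrix.nonsing_inv_mul _ ((Matrix.isUnit_iff_isUnit_det _).mp hinv)
  rw [neg_mul_add_one_sub_smul_mul_eq hg] at hF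
  exact (hF.matrix_mulVec _).add_const _

/-- Derivative of the flow utility under a general normalization (Corollary 1). -/
theorem stmt_5 (X : ℕ) (Qa QA : Matrix (Fin X) (Fin X) ℝ)
    (pA pa : Fin X → ℝ) (πbarA : Fin X → ℝ)
    (hpA : ∀ x, pA x ∈ Set.Ioo (0 : ℝ) 1)
    (hpa : ∀ x, pa x ∈ Set.Ioo (0 : ℝ) 1)
    (β : ℝ)
    (hinv : IsUnit ((1 : Matrix (Fin X) (Fin X) ℝ) - β • QA)) :
    HasDerivAt
      (fun t : ℝ =>
        (((1 : Matrix (Fin X) (Fin X) ℝ) - t • Qa) * (1 - t • QA)⁻¹).mulVec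
            (fun x => πbarA x - Real.log (pA x))
          + fun x => Real.log (pa x))
      ((-((Qa * (1 - β • QA)⁻¹ - (1 - β • QA)⁻¹ * QA) * (1 - β • QA)⁻¹)).mulVec
        (fun x => πbarA x - Real.log (pA x))) β :=
  stmt_5_general X Qa QA pA pa πbarA β hinv
end

section
/- Derivative of flow utility under ρ-period finite dependence (Proposition 4): Let Q_A be an X×X row-stochastic real matrix, let Q_a be an X×X real matrix, let β ∈ [0, 1), and suppose there exists a natural number ρ ≥ 1 such that Q_a Q_A^ρ = Q_A^{ρ+1} (ρ-period finite dependence between actions a and A). Let p_A ∈ ℝ^X have all entries in (0,1), let p_a ∈ ℝ^X have all entries in (0,1), and define π_a(t) := (I_X − tQ_a)(I_X − tQ_A)⁻¹(−log p_A) + log p_a for t ∈ [0,1). Then π_a is differentiable at β with derivative ∂π_a/∂β = −(Q_a − Q_A)(I_X + βQ_A + β²Q_A² + ⋯ + β^{ρ−1}Q_A^{ρ−1})(I_X − βQ_A)⁻¹(−log p_A). -/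
/-!
Write `R = (1 - β • Q_A)⁻¹` and `E = Q_a - Q_A`. Wherever `1 - β • Q_A` is invertible, the product
rule and the derivative of the inverse give `d/dt [(1 - t • Q_a)(1 - t • Q_A)⁻¹] = -E R²` at `β`,
because `R = 1 + β • Q_A R`; invertibility for `|β| < 1` comes from the `∞`-operator norm of a
row-stochastic matrix being at most `1`. Finite dependence says `E Q_A ^ ρ = 0`, so after
multiplication by `E` the Neumann series of `R` stops at degree `ρ - 1`:
`E R = E (1 + β Q_A + ⋯ + β ^ (ρ - 1) Q_A ^ (ρ - 1))`.
-/

open Finset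

theorem mul_ringInverse_one_sub_eq_mul_geom_sum {A : Type*} [Ring A] {e q : A} {ρ : ℕ}
    (he : e * q ^ ρ = 0) (hq : IsUnit (1 - q)) :
    e * Ring.inverse (1 - q) = e * ∑ r ∈ range ρ, q ^ r := by
  calc e * Ring.inverse (1 - q) = e * (1 - q ^ ρ) * Ring.inverse (1 - q) := by
        rw [mul_sub, he, mul_one, sub_zero]
    _ = e * ∑ r ∈ range ρ, q ^ r := by
        rw [← geom_sum_mul_neg, ← mul_assoc, Ring.mul_inverse_cancel_right _ _ hq]

section NormedAlgebra

variable {𝕜 A : Type*} [NontriviallyNormedField 𝕜] [NormedRing A] [NormedAlgebra 𝕜 A]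
  [HasSummableGeomSeries A]

theorem hasDerivAt_ringInverse_one_sub_smul {q : A} {β : 𝕜} (hβ : IsUnit (1 - β • q)) :
    HasDerivAt (fun t : 𝕜 => Ring.inverse (1 - t • q))
      (Ring.inverse (1 - β • q) * q * Ring.inverse (1 - β • q)) β := by
  obtain ⟨u, hu⟩ := hβ
  have hlin : HasDerivAt (fun t : 𝕜 => 1 - t • q) (-q) β := by
    simpa using ((hasDerivAt_id β).smul_const q).const_sub 1
  have := (hu ▸ hasFDerivAt_ringInverse (𝕜 := 𝕜) u).comp_hasDerivAt β hlin
  simpa [Function.comp_def, ← hu, Ring.inverse_unit] using this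

theorem hasDerivAt_one_sub_smul_mul_ringInverse_one_sub_smul {p q : A} {β : 𝕜}
    (hβ : IsUnit (1 - β • q)) :
    HasDerivAt (fun t : 𝕜 => (1 - t • p) * Ring.inverse (1 - t • q))
      (-((p - q) * Ring.inverse (1 - β • q) * Ring.inverse (1 - β • q))) β := by
  have hlin : HasDerivAt (fun t : 𝕜 => 1 - t • p) (-p) β := by
    simpa using ((hasDerivAt_id β).smul_const p).const_sub 1
  convert hlin.fun_mul (hasDerivAt_ringInverse_one_sub_smul hβ) using 1
  set R := Ring.inverse (1 - β • q)
  have hR : (1 - β • q) * R = 1 := Ring.mul_inverse_cancel _ hβ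
  have hR' : R = 1 + β • (q * R) := by
    rw [← hR, sub_mul, one_mul, smul_mul_assoc, sub_add_cancel]
  have hp : 1 - β • p = (1 - β • q) - β • (p - q) := by
    rw [smul_sub]; abel
  calc -((p - q) * R * R) = -((p - q) * R * (1 + β • (q * R))) := by rw [← hR']
    _ = -p * R + ((1 - β • q) * R * (q * R) - β • (p - q) * (R * (q * R))) := by
      rw [hR, one_mul]
      simp only [mul_add, mul_one, sub_mul, neg_mul, mul_smul_comm, smul_mul_assoc, mul_assoc]
      abel
    _ = -p * R + (1 - β • p) * (R * q * R) := by
      rw [hp, sub_mul _ _ (R * q * R)]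
      simp only [mul_assoc]

end NormedAlgebra

namespace Matrix

variable {n : Type*} [Fintype n] [DecidableEq n]

theorem mul_inv_one_sub_smul_eq_mul_geom_sum {K : Type*} [CommRing K] {P Q : Matrix n n K}
    {β : K} {ρ : ℕ} (hPQ : P * Q ^ ρ = Q ^ (ρ + 1)) (hβ : IsUnit (1 - β • Q)) :
    (P - Q) * (1 - β • Q)⁻¹ = (P - Q) * ∑ r ∈ range ρ, β ^ r • Q ^ r := by
  have hvanish : (P - Q) * (β • Q) ^ ρ = 0 := by
    rw [smul_pow, mul_smul_comm, sub_mul, hPQ, pow_succ', sub_self, smul_zero]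
  simp_rw [nonsing_inv_eq_ringInverse, mul_ringInverse_one_sub_eq_mul_geom_sum hvanish hβ,
    smul_pow]

open scoped Norms.Operator

theorem linfty_opNorm_le_one_of_mem_rowStochastic {Q : Matrix n n ℝ}
    (hQ : Q ∈ rowStochastic ℝ n) : ‖Q‖ ≤ 1 := by
  rw [linfty_opNorm_def, NNReal.coe_le_one]
  refine Finset.sup_le fun i _ => ?_
  rw [← NNReal.coe_le_coe, NNReal.coe_sum]
  simp [Real.norm_of_nonneg (nonneg_of_mem_rowStochastic hQ), sum_row_of_mem_rowStochastic hQ i]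

theorem isUnit_one_sub_smul_of_mem_rowStochastic {Q : Matrix n n ℝ}
    (hQ : Q ∈ rowStochastic ℝ n) {t : ℝ} (ht : |t| < 1) : IsUnit (1 - t • Q) :=
  isUnit_one_sub_of_norm_lt_one <| calc
    ‖t • Q‖ = |t| * ‖Q‖ := by rw [norm_smul, Real.norm_eq_abs]
    _ ≤ |t| := mul_le_of_le_one_right (abs_nonneg t) (linfty_opNorm_le_one_of_mem_rowStochastic hQ)
    _ < 1 := ht

theorem hasDerivAt_one_sub_smul_mul_inv_one_sub_smul_mulVec {𝕜 : Type*}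
    [RCLike 𝕜] {P Q : Matrix n n 𝕜} {β : 𝕜}
    (hβ : IsUnit (1 - β • Q)) (c : n → 𝕜) :
    HasDerivAt (fun t : 𝕜 => ((1 - t • P) * (1 - t • Q)⁻¹) *ᵥ c)
      ((-((P - Q) * (1 - β • Q)⁻¹ * (1 - β • Q)⁻¹)) *ᵥ c) β := by
  let L : Matrix n n 𝕜 →L[𝕜] n → 𝕜 := LinearMap.toContinuousLinearMap ((mulVecBilin 𝕜 𝕜).flip c)
  simp_rw [nonsing_inv_eq_ringInverse]
  exact L.hasFDerivAt.comp_hasDerivAt β (hasDerivAt_one_sub_smul_mul_ringInverse_one_sub_smul hβ)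

end Matrix

open Matrix

theorem stmt_8_general (X : ℕ) (QA Qa : Matrix (Fin X) (Fin X) ℝ)
    (hQAnonneg : ∀ i j, 0 ≤ QA i j)
    (hQArow : ∀ i, ∑ j, QA i j = 1)
    (β : ℝ) (hβ0 : 0 ≤ β) (hβ1 : β < 1)
    (ρ : ℕ)
    (hfd : Qa * QA ^ ρ = QA ^ (ρ + 1))
    (pA pa : Fin X → ℝ) :
    HasDerivAt
      (fun t : ℝ =>
        (((1 : Matrix (Fin X) (Fin X) ℝ) - t • Qa) * (1 - t • QA)⁻¹).mulVec
            (fun x => -Real.log (pA x))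
          + fun x => Real.log (pa x))
      ((-((Qa - QA) * (∑ r ∈ Finset.range ρ, β ^ r • QA ^ r) * (1 - β • QA)⁻¹)).mulVec
        (fun x => -Real.log (pA x))) β := by
  have hQA : QA ∈ rowStochastic ℝ (Fin X) := mem_rowStochastic_iff_sum.2 ⟨hQAnonneg, hQArow⟩
  have hunit : IsUnit (1 - β • QA) :=
    isUnit_one_sub_smul_of_mem_rowStochastic hQA (abs_lt.2 ⟨by linarith, hβ1⟩)
  rw [← mul_inv_one_sub_smul_eq_mul_geom_sum hfd hunit]
  exact (hasDerivAt_one_sub_smul_mul_inv_one_sub_smul_mulVec hunit _).add_const _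

/-- Derivative of flow utility under ρ-period finite dependence (Proposition 4). -/
theorem stmt_8 (X : ℕ) (QA Qa : Matrix (Fin X) (Fin X) ℝ)
    (hQAnonneg : ∀ i j, 0 ≤ QA i j)
    (hQArow : ∀ i, ∑ j, QA i j = 1)
    (β : ℝ) (hβ0 : 0 ≤ β) (hβ1 : β < 1)
    (ρ : ℕ) (hρ : 1 ≤ ρ)
    (hfd : Qa * QA ^ ρ = QA ^ (ρ + 1))
    (pA pa : Fin X → ℝ)
    (hpA : ∀ x, pA x ∈ Set.Ioo (0 : ℝ) 1)
    (hpa : ∀ x, pa x ∈ Set.Ioo (0 : ℝ) 1) :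
    HasDerivAt
      (fun t : ℝ =>
        (((1 : Matrix (Fin X) (Fin X) ℝ) - t • Qa) * (1 - t • QA)⁻¹).mulVec
            (fun x => -Real.log (pA x))
          + fun x => Real.log (pa x))
      ((-((Qa - QA) * (∑ r ∈ Finset.range ρ, β ^ r • QA ^ r) * (1 - β • QA)⁻¹)).mulVec
        (fun x => -Real.log (pA x))) β :=
  stmt_8_general X QA Qa hQAnonneg hQArow β hβ0 hβ1 ρ hfd pA pa
end

section
/- Nondecreasing utility under a renewal action (Corollary 3, part 1): Let Q_A be the X×X renewal transition matrix whose every row equals the first standard basis vector (i.e., (Q_A)_{x,1} = 1 and (Q_A)_{x,y} = 0 for y ≠ 1, for all x), let Q_a be an X×X row-stochastic real matrix, let p_A ∈ ℝ^X have all entries in (0,1] with p_A(1) > 0 and p_A(1) ≤ p_A(x) for every x ∈ {1,…,X}, let p_a ∈ ℝ^X have all entries in (0,1), and define π_a(β) := (I_X − βQ_a)(I_X − βQ_A)⁻¹(−log p_A) + log p_a for β ∈ [0,1). Then π_a is componentwise nondecreasing in β: for all 0 ≤ β₁ ≤ β₂ < 1 and every state x, π_a(β₁)(x) ≤ π_a(β₂)(x).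 -/
/-!
The renewal matrix `R` (every row equal to `e₁`) is idempotent and absorbs every row-stochastic
`Q` from the left, `Q R = R`. Hence `(I - βR)⁻¹ = I + β/(1-β) R` and the matrix in `π_a(β)`
collapses to `I - β(Q - R)`, so `π_a(β)` is affine in `β` with slope `v(1) - Q v`, where
`v = -log p_A`. Since `p_A(1)` is the smallest entry, `v(1)` is the largest entry of `v` and
dominates its `Q`-averages: the slope is nonnegative.
-/

open Matrix

namespace Matrix

variable {R n : Type*} [Fintype n] [DecidableEq n]

lemma mulVec_le_of_mem_rowStochastic [Semiring R] [PartialOrder R] [IsOrderedRing R]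
    {M : Matrix n n R} (hM : M ∈ rowStochastic R n) {x : n → R} {c : R} (hx : ∀ j, x j ≤ c)
    (i : n) : (M *ᵥ x) i ≤ c :=
  calc (M *ᵥ x) i = ∑ j, M i j * x j := rfl
    _ ≤ ∑ j, M i j * c :=
      Finset.sum_le_sum fun j _ => mul_le_mul_of_nonneg_left (hx j) (hM.1 i j)
    _ = c := by rw [← Finset.sum_mul, sum_row_of_mem_rowStochastic hM, one_mul]

lemma inv_one_sub_smul_of_isIdempotentElem [Field R] {P : Matrix n n R} (hP : IsIdempotentElem P)
    {β : R} (hβ : β ≠ 1) : (1 - β • P)⁻¹ = 1 + (β / (1 - β)) • P := by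
  have h1β : 1 - β ≠ 0 := sub_ne_zero.2 hβ.symm
  refine inv_eq_right_inv ?_
  simp only [Matrix.sub_mul, Matrix.mul_add, Matrix.one_mul, Matrix.mul_one, Matrix.smul_mul,
    Matrix.mul_smul, hP.eq]
  match_scalars <;> field_simp; ring

lemma one_sub_smul_mul_inv_one_sub_smul [Field R] {P Q : Matrix n n R} (hP : IsIdempotentElem P)
    (hQP : Q * P = P) {β : R} (hβ : β ≠ 1) :
    (1 - β • Q) * (1 - β • P)⁻¹ = 1 - β • (Q - P) := by
  have h1β : 1 - β ≠ 0 := sub_ne_zero.2 hβ.symm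
  rw [inv_one_sub_smul_of_isIdempotentElem hP hβ]
  simp only [Matrix.sub_mul, Matrix.mul_add, Matrix.one_mul, Matrix.mul_one, Matrix.smul_mul,
    Matrix.mul_smul, hQP]
  match_scalars <;> field_simp

end Matrix

section Renewal

variable {R n : Type*} [Fintype n] [DecidableEq n]

def renewalMatrix [Zero R] [One R] (s : n) : Matrix n n R :=
  of fun _ y => if y = s then 1 else 0

lemma renewalMatrix_mulVec [NonAssocSemiring R] (s : n) (v : n → R) :
    renewalMatrix s *ᵥ v = fun _ => v s := by
  ext i
  simp [renewalMatrix, mulVec, dotProduct]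

lemma mul_renewalMatrix [NonAssocSemiring R] {M : Matrix n n R} (hM : M *ᵥ 1 = 1) (s : n) :
    M * renewalMatrix s = renewalMatrix s := by
  ext i j
  have hi : ∑ k, M i k = 1 := by simpa [mulVec, dotProduct] using congr_fun hM i
  by_cases hj : j = s <;> simp [renewalMatrix, mul_apply, hj, hi]

lemma isIdempotentElem_renewalMatrix [NonAssocSemiring R] (s : n) :
    IsIdempotentElem (renewalMatrix s : Matrix n n R) :=
  mul_renewalMatrix (by rw [renewalMatrix_mulVec]; rfl) s

lemma one_sub_smul_mul_inv_one_sub_smul_renewalMatrix_mulVec [Field R]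
    {Q : Matrix n n R} (hQ : Q *ᵥ 1 = 1) (s : n) {β : R} (hβ : β ≠ 1) (v : n → R) (x : n) :
    (((1 - β • Q) * (1 - β • renewalMatrix s)⁻¹) *ᵥ v) x =
      v x + β * (v s - (Q *ᵥ v) x) := by
  rw [one_sub_smul_mul_inv_one_sub_smul (isIdempotentElem_renewalMatrix s)
    (mul_renewalMatrix hQ s) hβ]
  simp only [sub_mulVec, smul_mulVec, one_mulVec, renewalMatrix_mulVec, Pi.sub_apply,
    Pi.smul_apply, smul_eq_mul]
  ring

end Renewal

theorem stmt_10_general (X : ℕ) [NeZero X]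
    (QA Qa : Matrix (Fin X) (Fin X) ℝ)
    (hQA : QA = Matrix.of fun _ y => if y = (0 : Fin X) then (1 : ℝ) else 0)
    (hQanonneg : ∀ i j, 0 ≤ Qa i j)
    (hQarow : ∀ i, ∑ j, Qa i j = 1)
    (pA pa : Fin X → ℝ)
    (hpA0 : 0 < pA 0)
    (hpAmin : ∀ x, pA 0 ≤ pA x) :
    let πa : ℝ → Fin X → ℝ := fun β =>
      (((1 : Matrix (Fin X) (Fin X) ℝ) - β • Qa) * (1 - β • QA)⁻¹).mulVec
          (fun x => -Real.log (pA x))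
        + fun x => Real.log (pa x)
    ∀ β₁ β₂ : ℝ, 0 ≤ β₁ → β₁ ≤ β₂ → β₂ < 1 →
      ∀ x : Fin X, πa β₁ x ≤ πa β₂ x := by
  intro πa β₁ β₂ _ hβ₁₂ hβ₂ x
  set v : Fin X → ℝ := fun x => -Real.log (pA x)
  have hQa : Qa ∈ rowStochastic ℝ (Fin X) := mem_rowStochastic_iff_sum.2 ⟨hQanonneg, hQarow⟩
  have hslope : (Qa *ᵥ v) x ≤ v 0 :=
    mulVec_le_of_mem_rowStochastic hQa (fun j => neg_le_neg (Real.log_le_log hpA0 (hpAmin j))) x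
  have hπa : ∀ β < 1, πa β x = v x + β * (v 0 - (Qa *ᵥ v) x) + Real.log (pa x) := by
    intro β hβ
    simp only [πa, Pi.add_apply, show QA = renewalMatrix 0 from hQA]
    rw [one_sub_smul_mul_inv_one_sub_smul_renewalMatrix_mulVec hQa.2 0 hβ.ne]
  rw [hπa β₁ (hβ₁₂.trans_lt hβ₂), hπa β₂ hβ₂]
  linarith [mul_le_mul_of_nonneg_right hβ₁₂ (sub_nonneg.2 hslope)]

/-- Nondecreasing utility under a renewal action (Corollary 3, part 1). -/
theorem stmt_10 (X : ℕ) [NeZero X]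
    (QA Qa : Matrix (Fin X) (Fin X) ℝ)
    (hQA : QA = Matrix.of fun _ y => if y = (0 : Fin X) then (1 : ℝ) else 0)
    (hQanonneg : ∀ i j, 0 ≤ Qa i j)
    (hQarow : ∀ i, ∑ j, Qa i j = 1)
    (pA pa : Fin X → ℝ)
    (hpA : ∀ x, 0 < pA x ∧ pA x ≤ 1)
    (hpA0 : 0 < pA 0)
    (hpAmin : ∀ x, pA 0 ≤ pA x)
    (hpa : ∀ x, pa x ∈ Set.Ioo (0 : ℝ) 1) :
    let πa : ℝ → Fin X → ℝ := fun β =>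
      (((1 : Matrix (Fin X) (Fin X) ℝ) - β • Qa) * (1 - β • QA)⁻¹).mulVec
          (fun x => -Real.log (pA x))
        + fun x => Real.log (pa x)
    ∀ β₁ β₂ : ℝ, 0 ≤ β₁ → β₁ ≤ β₂ → β₂ < 1 →
      ∀ x : Fin X, πa β₁ x ≤ πa β₂ x :=
  stmt_10_general X QA Qa hQA hQanonneg hQarow pA pa hpA0 hpAmin
end

section
/- Nonincreasing utility under a renewal action (Corollary 3, part 2): Let Q_A be the X×X renewal transition matrix whose every row equals the first standard basis vector (i.e., (Q_A)_{x,1} = 1 and (Q_A)_{x,y} = 0 for y ≠ 1, for all x), let Q_a be an X×X row-stochastic real matrix, let p_A ∈ ℝ^X have all entries in (0,1] with p_A(1) > 0 and p_A(1) ≥ p_A(x) for every x ∈ {1,…,X}, let p_a ∈ ℝ^X have all entries in (0,1), and define π_a(β) := (I_X − βQ_a)(I_X − βQ_A)⁻¹(−log p_A) + log p_a for β ∈ [0,1). Then π_a is componentwise nonincreasing in β: for all 0 ≤ β₁ ≤ β₂ < 1 and every state x, π_a(β₁)(x) ≥ π_a(β₂)(x). -/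
/-- Nonincreasing utility under a renewal action (Corollary 3, part 2). -/
theorem stmt_11 (X : ℕ) [NeZero X]
    (QA Qa : Matrix (Fin X) (Fin X) ℝ)
    (hQA : QA = Matrix.of fun _ y => if y = (0 : Fin X) then (1 : ℝ) else 0)
    (hQanonneg : ∀ i j, 0 ≤ Qa i j)
    (hQarow : ∀ i, ∑ j, Qa i j = 1)
    (pA pa : Fin X → ℝ)
    (hpA : ∀ x, 0 < pA x ∧ pA x ≤ 1)
    (hpA0 : 0 < pA 0)
    (hpAmax : ∀ x, pA x ≤ pA 0)
    (hpa : ∀ x, pa x ∈ Set.Ioo (0 : ℝ) 1) :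
    let πa : ℝ → Fin X → ℝ := fun β =>
      (((1 : Matrix (Fin X) (Fin X) ℝ) - β • Qa) * (1 - β • QA)⁻¹).mulVec
          (fun x => -Real.log (pA x))
        + fun x => Real.log (pa x)
    ∀ β₁ β₂ : ℝ, 0 ≤ β₁ → β₁ ≤ β₂ → β₂ < 1 →
      ∀ x : Fin X, πa β₂ x ≤ πa β₁ x := by
  intro πa β₁ β₂ hβ₁ h12 hβ₂ x
  set v : Fin X → ℝ := fun x => -Real.log (pA x) with hv
  have hQA2 : QA * QA = QA := by
    subst hQA
    ext i j
    simp [Matrix.mul_apply]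
  have hQAv : QA.mulVec v = fun _ => v 0 := by
    funext i
    simp [hQA, Matrix.mulVec, dotProduct]
  have hQaconst : ∀ c : ℝ, Qa.mulVec (fun _ => c) = fun _ => c := by
    intro c
    funext i
    simp only [Matrix.mulVec, dotProduct]
    rw [← Finset.sum_mul, hQarow, one_mul]
  have key : ∀ β : ℝ, β < 1 →
      ∀ y, πa β y = v y + Real.log (pa y) + β * (v 0 - Qa.mulVec v y) := by
    intro β hβ y
    have h1 : (1 : ℝ) - β ≠ 0 := by linarith
    set c : ℝ := β / (1 - β) with hc
    have hcβ : c * (1 - β) = β := by rw [hc]; field_simp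
    have hinv : (1 - β • QA)⁻¹ = 1 + c • QA := by
      apply Matrix.inv_eq_right_inv
      have expand : (1 - β • QA) * (1 + c • QA)
          = 1 + c • QA - β • QA - (c * β) • QA := by
        simp only [sub_mul, mul_add, one_mul, mul_one, Matrix.smul_mul, Matrix.mul_smul,
          hQA2, smul_smul, mul_comm β c]
        abel
      rw [expand]
      have hz : c • QA - β • QA - (c * β) • QA = (0 : Matrix (Fin X) (Fin X) ℝ) := by
        rw [← sub_smul, ← sub_smul]
        have : c - β - c * β = 0 := by
          have : c - β - c * β = c * (1 - β) - β := by ring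
          rw [this, hcβ]; ring
        rw [this, zero_smul]
      rw [add_sub_assoc, add_sub_assoc, hz, add_zero]
    have hmv : (((1 : Matrix (Fin X) (Fin X) ℝ) - β • Qa) * (1 - β • QA)⁻¹).mulVec v
        = fun z => v z - β * Qa.mulVec v z + β * v 0 := by
      rw [← Matrix.mulVec_mulVec, hinv]
      have h2 : ((1 : Matrix (Fin X) (Fin X) ℝ) + c • QA).mulVec v
          = fun z => v z + c * v 0 := by
        funext z
        rw [Matrix.add_mulVec, Matrix.one_mulVec, Matrix.smul_mulVec, hQAv]
        simp
      rw [h2]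
      funext z
      have h3 : (fun z => v z + c * v 0) = v + (fun _ => c * v 0) := rfl
      rw [h3, Matrix.mulVec_add, Matrix.sub_mulVec, Matrix.one_mulVec,
        Matrix.smul_mulVec, Matrix.sub_mulVec, Matrix.one_mulVec,
        Matrix.smul_mulVec, hQaconst]
      simp only [Pi.add_apply, Pi.sub_apply, Pi.smul_apply, smul_eq_mul]
      have h4 : c * v 0 - β * (c * v 0) = β * v 0 := by
        have : c * v 0 - β * (c * v 0) = c * (1 - β) * v 0 := by ring
        rw [this, hcβ]
      linarith [h4]
    show (((1 : Matrix (Fin X) (Fin X) ℝ) - β • Qa) * (1 - β • QA)⁻¹).mulVec v y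
        + Real.log (pa y) = _
    rw [hmv]
    ring
  have hslope : v 0 - Qa.mulVec v x ≤ 0 := by
    have hbound : (fun _ => v 0 : Fin X → ℝ) x ≤ Qa.mulVec v x := by
      simp only [Matrix.mulVec, dotProduct]
      have : v 0 = ∑ j, Qa x j * v 0 := by
        rw [← Finset.sum_mul, hQarow, one_mul]
      rw [this]
      apply Finset.sum_le_sum
      intro j _
      apply mul_le_mul_of_nonneg_left _ (hQanonneg x j)
      simp only [hv]
      have := Real.log_le_log (hpA j).1 (hpAmax j)
      linarith
    simpa using sub_nonpos.mpr hbound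
  rw [key β₁ (lt_of_le_of_lt h12 hβ₂) x, key β₂ hβ₂ x]
  have := mul_le_mul_of_nonpos_right h12 hslope
  linarith
end
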